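/- Let Δ ∈ ℝ, and for θ ∈ ℝ set a(θ) = (θ - Δ)/2 and c(θ) = (θ + Δ)/2. Let b_n(θ) and u_n(θ) be the odd-case para-Racah recurrence coefficients with parameters a = a(θ), c = c(θ) and α = 1/2. Then as θ → +∞: for every n ∈ {0,…,N}, -(2 b_n(θ) + 2 a(θ)²)/θ tends to (N - 1 + 2Δ)/2; and for every n ∈ {1,…,N}, 4 u_n(θ)/θ² tends to n(N+1-n)(2n-N-1-2Δ)(2n-N-1+2Δ)/(4(2n-N)(2n-N-2)), the recurrence coefficients of the monic para-Krawtchouk polynomials. -/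

import Mathlib

open Filter Topology Polynomial

noncomputable section

/-- The recurrence coefficient `bₙ` of the para-Racah polynomials, odd case `N = 2j+1`. -/
def bOdd (j : ℕ) (a c α : ℝ) (n : ℕ) : ℝ :=
  if n = j then
    -a ^ 2 - (j : ℝ) * (1 + a - c) * (1 + a + c + j) / 2 + α * (a - c) * (1 + (j : ℝ)) * (a + c + j)
  else if n = j + 1 then
    -a ^ 2 - (j : ℝ) * (1 + a - c) * (1 + a + c + j) / 2
      + (1 - α) * (a - c) * (1 + (j : ℝ)) * (a + c + j)
  else
    -(a * (a + j) + c * (c + j) + (n : ℝ) * ((2 * (j : ℝ) + 1) - n)) / 2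

/-- The recurrence coefficient `uₙ` of the para-Racah polynomials, odd case `N = 2j+1`. -/
def uOdd (j : ℕ) (a c α : ℝ) (n : ℕ) : ℝ :=
  if n = j + 1 then
    α * (1 - α) * (a - c) ^ 2 * (1 + (j : ℝ)) ^ 2 * (a + c + j) ^ 2
  else
    (n : ℝ) * ((2 * (j : ℝ) + 1) + 1 - n) * ((2 * (j : ℝ) + 1) - n + a + c) * ((n : ℝ) - 1 + a + c)
        * (((n : ℝ) - j - 1) ^ 2 - (a - c) ^ 2) /
      (4 * ((2 * (j : ℝ) + 1) - 2 * n) * ((2 * (j : ℝ) + 1) - 2 * n + 2))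

/-- The recurrence coefficient `uₙ` of the monic para-Krawtchouk polynomials, `N = 2j+1`. -/
def paraKrawtchoukU (j : ℕ) (Δ : ℝ) (n : ℕ) : ℝ :=
  (n : ℝ) * ((2 * (j : ℝ) + 1) + 1 - n)
    * (2 * (n : ℝ) - (2 * (j : ℝ) + 1) - 1 - 2 * Δ)
    * (2 * (n : ℝ) - (2 * (j : ℝ) + 1) - 1 + 2 * Δ) /
    (4 * (2 * (n : ℝ) - (2 * (j : ℝ) + 1)) * (2 * (n : ℝ) - (2 * (j : ℝ) + 1) - 2))

/- At `α = 1/2` the exceptional coefficients at `n = j, j + 1` fit the generic formula. -/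
theorem neg_two_mul_bOdd_half_sub_sq (j n : ℕ) (a c : ℝ) :
    -(2 * bOdd j a c (1 / 2) n + 2 * a ^ 2)
      = (j + (c - a)) * (a + c) + n * (2 * (j : ℝ) + 1 - n) := by
  unfold bOdd
  split_ifs with hj hj1
  · subst hj; ring
  · subst hj1; push_cast; ring
  · ring

theorem four_mul_uOdd_half (j n : ℕ) (a c : ℝ) :
    4 * uOdd j a c (1 / 2) n = paraKrawtchoukU j (c - a) n
      * ((2 * (j : ℝ) + 1 - n + (a + c)) * (n - 1 + (a + c))) := by
  unfold uOdd paraKrawtchoukU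
  split_ifs with hj
  · subst hj; push_cast; ring
  · ring

theorem tendsto_mul_add_div_atTop (A K : ℝ) :
    Tendsto (fun θ : ℝ => (A * θ + K) / θ) atTop (𝓝 A) := by
  have h : Tendsto (fun θ : ℝ => A + K * θ⁻¹) atTop (𝓝 A) := by
    simpa using (tendsto_inv_atTop_zero.const_mul K).const_add A
  refine h.congr' ?_
  filter_upwards [eventually_ne_atTop 0] with θ hθ
  field_simp

theorem paraRacahOdd_to_paraKrawtchouk (j : ℕ) (Δ : ℝ) :
    (∀ n : ℕ, n ≤ 2 * j + 1 →
      Tendsto (fun θ : ℝ =>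
          -(2 * bOdd j ((θ - Δ) / 2) ((θ + Δ) / 2) (1 / 2) n + 2 * ((θ - Δ) / 2) ^ 2) / θ)
        atTop (𝓝 (((2 * (j : ℝ) + 1) - 1 + 2 * Δ) / 2))) ∧
    (∀ n : ℕ, 1 ≤ n → n ≤ 2 * j + 1 →
      Tendsto (fun θ : ℝ =>
          4 * uOdd j ((θ - Δ) / 2) ((θ + Δ) / 2) (1 / 2) n / θ ^ 2)
        atTop (𝓝 ((n : ℝ) * ((2 * (j : ℝ) + 1) + 1 - n)
          * (2 * (n : ℝ) - (2 * (j : ℝ) + 1) - 1 - 2 * Δ)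
          * (2 * (n : ℝ) - (2 * (j : ℝ) + 1) - 1 + 2 * Δ) /
          (4 * (2 * (n : ℝ) - (2 * (j : ℝ) + 1)) * (2 * (n : ℝ) - (2 * (j : ℝ) + 1) - 2))))) := by
  have hsum (θ : ℝ) : (θ - Δ) / 2 + (θ + Δ) / 2 = θ := by ring
  have hdiff (θ : ℝ) : (θ + Δ) / 2 - (θ - Δ) / 2 = Δ := by ring
  constructor
  · intro n _
    have hlim := tendsto_mul_add_div_atTop (j + Δ) (n * (2 * (j : ℝ) + 1 - n))
    rw [show ((2 * (j : ℝ) + 1) - 1 + 2 * Δ) / 2 = j + Δ by ring]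
    refine hlim.congr fun θ => ?_
    rw [neg_two_mul_bOdd_half_sub_sq, hsum, hdiff]
  · intro n _ _
    have hlim := ((tendsto_mul_add_div_atTop 1 (2 * (j : ℝ) + 1 - n)).mul
      (tendsto_mul_add_div_atTop 1 (n - 1))).const_mul (paraKrawtchoukU j Δ n)
    rw [mul_one, mul_one] at hlim
    refine hlim.congr fun θ => ?_
    rw [four_mul_uOdd_half, hsum, hdiff]
    ring
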